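/- arXiv:2208.13323 — 3 statements merged into one kernel-verified Lean document; each statement's English description precedes it below -/
import Mathlib

section
/- Let (Ω, F, P) be a probability space, X : Ω → ℝ a random variable, Y(0), Y(1) integrable random variables, π, π̃ : ℝ → {0,1} measurable policies, and set Y = π̃(X)·Y(1) + (1−π̃(X))·Y(0) and m(w, x) = E[Y(w) | X = x]. Then E[Y(π(X))] = E[π(X)·π̃(X)·Y + (1−π(X))·(1−π̃(X))·Y] + E[π(X)·(1−π̃(X))·m(1, X)] + E[(1−π(X))·π̃(X)·m(0, X)]. -/
open MeasureTheory

/-! The value of `π` splits pointwise according to whether `π` and `π̃` agree. Where they agree,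
`Y(π(X))` is the observed `Y`; where they disagree the counterfactual outcome enters with a
weight that is a bounded function of `X`, so by the pull-out property it can be replaced by its
conditional mean given `X` without changing the expectation. -/

lemma one_sub_eq_zero_or_eq_one {a : ℝ} (ha : a = 0 ∨ a = 1) : 1 - a = 0 ∨ 1 - a = 1 := by
  rcases ha with rfl | rfl <;> norm_num

lemma norm_mul_le_one_of_eq_zero_or_eq_one {a b : ℝ} (ha : a = 0 ∨ a = 1) (hb : b = 0 ∨ b = 1) :
    ‖a * b‖ ≤ 1 := by
  rcases ha with rfl | rfl <;> rcases hb with rfl | rfl <;> norm_num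

section CondExp

variable {Ω : Type*} {m mΩ : MeasurableSpace Ω} {μ : Measure Ω}

lemma integral_mul_condExp_of_bound [IsFiniteMeasure μ] (hm : m ≤ mΩ) {f g : Ω → ℝ}
    (hf : StronglyMeasurable[m] f) (hg : Integrable g μ) (c : ℝ) (hf_bound : ∀ᵐ ω ∂μ, ‖f ω‖ ≤ c) :
    ∫ ω, f ω * (μ[g | m]) ω ∂μ = ∫ ω, f ω * g ω ∂μ := by
  rw [← integral_condExp hm (f := fun ω => f ω * g ω)]
  exact integral_congr_ae (condExp_stronglyMeasurable_mul_of_bound hm hf hg c hf_bound).symm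

lemma integral_comp_mul_condExp_comap [IsFiniteMeasure μ] {X : Ω → ℝ} (hX : Measurable X)
    {w : ℝ → ℝ} (hw : Measurable w) (c : ℝ) (hwc : ∀ x, ‖w x‖ ≤ c) {Z : Ω → ℝ}
    (hZ : Integrable Z μ) :
    ∫ ω, w (X ω) * (μ[Z | MeasurableSpace.comap X inferInstance]) ω ∂μ
      = ∫ ω, w (X ω) * Z ω ∂μ :=
  integral_mul_condExp_of_bound hX.comap_le
    (hw.comp (Measurable.of_comap_le le_rfl)).stronglyMeasurable hZ c
    (ae_of_all μ fun ω => hwc (X ω))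

lemma integrable_comp_mul_of_bound {X : Ω → ℝ} (hX : Measurable X) {w : ℝ → ℝ}
    (hw : Measurable w) (c : ℝ) (hwc : ∀ x, ‖w x‖ ≤ c) {Z : Ω → ℝ} (hZ : Integrable Z μ) :
    Integrable (fun ω => w (X ω) * Z ω) μ :=
  hZ.bdd_mul (hw.comp hX).aestronglyMeasurable (ae_of_all μ fun ω => hwc (X ω))

end CondExp

/-- Policy value decomposition: with observed outcome
`Y = π̃(X)·Y1 + (1−π̃(X))·Y0` and conditional means `m_w = E[Y_w | σ(X)]`,
the value `E[Y(π(X))]` of a policy `π` splits into the identifiable agreement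
term plus two counterfactual terms involving `m₁` and `m₀`. -/
theorem stmt1 {Ω : Type*} [MeasurableSpace Ω] (μ : Measure Ω) [IsProbabilityMeasure μ]
    (X : Ω → ℝ) (hX : Measurable X)
    (Y0 Y1 : Ω → ℝ) (hY0 : Integrable Y0 μ) (hY1 : Integrable Y1 μ)
    (pi pit : ℝ → ℝ) (hpim : Measurable pi) (hpitm : Measurable pit)
    (hpi01 : ∀ x, pi x = 0 ∨ pi x = 1) (hpit01 : ∀ x, pit x = 0 ∨ pit x = 1)
    (Y : Ω → ℝ) (hY : Y = fun ω => pit (X ω) * Y1 ω + (1 - pit (X ω)) * Y0 ω)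
    (m0 m1 : Ω → ℝ)
    (hm0 : m0 = μ[Y0 | MeasurableSpace.comap X (inferInstance : MeasurableSpace ℝ)])
    (hm1 : m1 = μ[Y1 | MeasurableSpace.comap X (inferInstance : MeasurableSpace ℝ)]) :
    ∫ ω, (pi (X ω) * Y1 ω + (1 - pi (X ω)) * Y0 ω) ∂μ
      = ∫ ω, (pi (X ω) * pit (X ω) * Y ω
              + (1 - pi (X ω)) * (1 - pit (X ω)) * Y ω) ∂μ
        + ∫ ω, pi (X ω) * (1 - pit (X ω)) * m1 ω ∂μ
        + ∫ ω, (1 - pi (X ω)) * pit (X ω) * m0 ω ∂μ := by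
  have hpi01' x := one_sub_eq_zero_or_eq_one (hpi01 x)
  have hpit01' x := one_sub_eq_zero_or_eq_one (hpit01 x)
  have hmB : Measurable fun x => pi x * (1 - pit x) := hpim.mul (measurable_const.sub hpitm)
  have hmC : Measurable fun x => (1 - pi x) * pit x := (measurable_const.sub hpim).mul hpitm
  have hbB x := norm_mul_le_one_of_eq_zero_or_eq_one (hpi01 x) (hpit01' x)
  have hbC x := norm_mul_le_one_of_eq_zero_or_eq_one (hpi01' x) (hpit01 x)
  have hA : Integrable (fun ω => pi (X ω) * pit (X ω) * Y1 ω
      + (1 - pi (X ω)) * (1 - pit (X ω)) * Y0 ω) μ :=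
    (integrable_comp_mul_of_bound hX (hpim.mul hpitm) 1
      (fun x => norm_mul_le_one_of_eq_zero_or_eq_one (hpi01 x) (hpit01 x)) hY1).fun_add
    (integrable_comp_mul_of_bound hX ((measurable_const.sub hpim).mul (measurable_const.sub hpitm))
      1 (fun x => norm_mul_le_one_of_eq_zero_or_eq_one (hpi01' x) (hpit01' x)) hY0)
  have hB : Integrable (fun ω => pi (X ω) * (1 - pit (X ω)) * Y1 ω) μ :=
    integrable_comp_mul_of_bound hX hmB 1 hbB hY1
  have hC : Integrable (fun ω => (1 - pi (X ω)) * pit (X ω) * Y0 ω) μ :=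
    integrable_comp_mul_of_bound hX hmC 1 hbC hY0
  have observed_of_agree : ∀ ω,
      pi (X ω) * pit (X ω) * Y ω + (1 - pi (X ω)) * (1 - pit (X ω)) * Y ω
      = pi (X ω) * pit (X ω) * Y1 ω + (1 - pi (X ω)) * (1 - pit (X ω)) * Y0 ω := by
    intro ω
    rcases hpit01 (X ω) with h | h <;> simp [hY, h]
  have hm1_swap : ∫ ω, pi (X ω) * (1 - pit (X ω)) * m1 ω ∂μ
      = ∫ ω, pi (X ω) * (1 - pit (X ω)) * Y1 ω ∂μ :=
    hm1 ▸ integral_comp_mul_condExp_comap hX hmB 1 hbB hY1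
  have hm0_swap : ∫ ω, (1 - pi (X ω)) * pit (X ω) * m0 ω ∂μ
      = ∫ ω, (1 - pi (X ω)) * pit (X ω) * Y0 ω ∂μ :=
    hm0 ▸ integral_comp_mul_condExp_comap hX hmC 1 hbC hY0
  rw [hm1_swap, hm0_swap, funext observed_of_agree, ← integral_add hA hB,
    ← integral_add (hA.fun_add hB) hC]
  congr 1 with ω
  ring
end

section
/- Let G ∈ Q (finite), X, Y random variables with Y integrable, e_g(X) = P(G = g | X) with e_{g'}(X) ≥ η > 0, and m̃(X, g') := E[Y · 1(G = g') | X] / e_{g'}(X). Then E[ 1(G = g)·m̃(X, g') + 1(G = g')·(e_g(X)/e_{g'}(X))·(Y − m̃(X, g')) | X ] = e_g(X)·m̃(X, g') almost surely. -/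
open MeasureTheory

private lemma aux_div_le {η a b : ℝ} (hη : 0 < η) (hb : η ≤ b) :
    ‖a‖ / b ≤ η⁻¹ * ‖a‖ := by
  have hb0 : (0 : ℝ) < b := lt_of_lt_of_le hη hb
  have h1 : (1 : ℝ) ≤ η⁻¹ * b := by
    have h2 := (one_le_div hη).mpr hb
    rwa [div_eq_inv_mul] at h2
  rw [div_le_iff₀ hb0]
  nlinarith [norm_nonneg a, mul_le_mul_of_nonneg_left h1 (norm_nonneg a)]

private lemma aux_ratio_le {η a b : ℝ} (hη : 0 < η) (ha0 : 0 ≤ a) (ha1 : a ≤ 1)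
    (hb : η ≤ b) : |a / b| ≤ η⁻¹ := by
  have hb0 : (0 : ℝ) < b := lt_of_lt_of_le hη hb
  have h1 : (1 : ℝ) ≤ η⁻¹ * b := by
    have h2 := (one_le_div hη).mpr hb
    rwa [div_eq_inv_mul] at h2
  rw [abs_of_nonneg (div_nonneg ha0 hb0.le), div_le_iff₀ hb0]
  linarith

private lemma aux_main {Ω : Type*} {m m0 : MeasurableSpace Ω} (hm : m ≤ m0)
    (μ : Measure Ω) [IsProbabilityMeasure μ]
    (Y : Ω → ℝ) (hYint : Integrable Y μ)
    (Ig Ig' : Ω → ℝ) (hIgm : Measurable Ig) (hIgm' : Measurable Ig')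
    (hIg01 : ∀ ω, Ig ω = 0 ∨ Ig ω = 1) (hIg'01 : ∀ ω, Ig' ω = 0 ∨ Ig' ω = 1)
    (eg eg' : Ω → ℝ) (heg : eg = μ[Ig | m]) (heg' : eg' = μ[Ig' | m])
    (η : ℝ) (hη : 0 < η) (hoverlap : ∀ᵐ ω ∂μ, η ≤ eg' ω)
    (mt : Ω → ℝ)
    (hmt : mt = fun ω => (μ[(fun ω' => Y ω' * Ig' ω') | m]) ω / eg' ω) :
    μ[(fun ω => Ig ω * mt ω + Ig' ω * (eg ω / eg' ω) * (Y ω - mt ω)) | m]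
      =ᵐ[μ] fun ω => eg ω * mt ω := by
  have hIg_abs : ∀ ω, |Ig ω| ≤ 1 := fun ω => by rcases hIg01 ω with h | h <;> simp [h]
  have hIg'_abs : ∀ ω, |Ig' ω| ≤ 1 := fun ω => by rcases hIg'01 ω with h | h <;> simp [h]
  have hIg_int : Integrable Ig μ := by
    refine Integrable.mono' (integrable_const (1 : ℝ)) hIgm.aestronglyMeasurable ?_
    filter_upwards with ω using hIg_abs ω
  have hIg'_int : Integrable Ig' μ := by
    refine Integrable.mono' (integrable_const (1 : ℝ)) hIgm'.aestronglyMeasurable ?_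
    filter_upwards with ω using hIg'_abs ω
  have heg_sm : StronglyMeasurable[m] eg := by rw [heg]; exact stronglyMeasurable_condExp
  have heg'_sm : StronglyMeasurable[m] eg' := by rw [heg']; exact stronglyMeasurable_condExp
  have heg_meas : Measurable eg := (heg_sm.mono hm).measurable
  have heg'_meas : Measurable eg' := (heg'_sm.mono hm).measurable
  have heg_nonneg : 0 ≤ᵐ[μ] eg := by
    rw [heg]
    refine condExp_nonneg ?_
    filter_upwards with ω
    rcases hIg01 ω with h | h <;> simp [h]
  have heg_le_one : ∀ᵐ ω ∂μ, eg ω ≤ 1 := by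
    rw [heg]
    have h := condExp_mono (μ := μ) (m := m) hIg_int (integrable_const (1 : ℝ))
      (Filter.Eventually.of_forall fun ω => by
        rcases hIg01 ω with h | h <;> simp [h])
    filter_upwards [h] with ω hω
    rw [condExp_const hm (1 : ℝ)] at hω
    exact hω
  have hpos : ∀ᵐ ω ∂μ, 0 < eg' ω := hoverlap.mono fun ω h => lt_of_lt_of_le hη h
  -- the numerator conditional expectation
  set C := μ[(fun ω' => Y ω' * Ig' ω') | m] with hCdef
  have hC_int : Integrable C μ := integrable_condExp
  have hC_sm : StronglyMeasurable[m] C := stronglyMeasurable_condExp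
  have hmt_eq : ∀ ω, mt ω = C ω / eg' ω := fun ω => by rw [hmt]
  have hmt_sm : StronglyMeasurable[m] mt := by
    rw [hmt]
    exact (hC_sm.measurable.div heg'_sm.measurable).stronglyMeasurable
  have hmt_meas : Measurable mt := (hmt_sm.mono hm).measurable
  have hmt_int : Integrable mt μ := by
    refine Integrable.mono' (g := fun ω => η⁻¹ * ‖C ω‖)
      (hC_int.norm.const_mul η⁻¹) hmt_meas.aestronglyMeasurable ?_
    filter_upwards [hoverlap] with ω hω
    rw [hmt_eq ω, norm_div, Real.norm_eq_abs (eg' ω), abs_of_pos (lt_of_lt_of_le hη hω)]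
    exact aux_div_le hη hω
  -- the ratio function
  have hr_sm : StronglyMeasurable[m] (fun ω => eg ω / eg' ω) :=
    (heg_sm.measurable.div heg'_sm.measurable).stronglyMeasurable
  have hr_meas : Measurable (fun ω => eg ω / eg' ω) := (hr_sm.mono hm).measurable
  have hr_bound : ∀ᵐ ω ∂μ, |eg ω / eg' ω| ≤ η⁻¹ := by
    filter_upwards [hoverlap, heg_nonneg, heg_le_one] with ω h1 h2 h3
    exact aux_ratio_le hη h2 h3 h1
  -- integrability of the three pieces
  have hf1_int : Integrable (fun ω => mt ω * Ig ω) μ := by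
    refine Integrable.mono' (g := fun ω => ‖mt ω‖) hmt_int.norm
      (hmt_meas.mul hIgm).aestronglyMeasurable ?_
    filter_upwards with ω
    calc ‖mt ω * Ig ω‖ = |mt ω| * |Ig ω| := abs_mul _ _
      _ ≤ |mt ω| * 1 := mul_le_mul_of_nonneg_left (hIg_abs ω) (abs_nonneg _)
      _ = ‖mt ω‖ := by rw [mul_one]; rfl
  have hYI_int : Integrable (fun ω => Y ω * Ig' ω) μ := by
    refine Integrable.mono' (g := fun ω => ‖Y ω‖) hYint.norm
      (hYint.1.mul hIgm'.aestronglyMeasurable) ?_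
    filter_upwards with ω
    calc ‖Y ω * Ig' ω‖ = |Y ω| * |Ig' ω| := abs_mul _ _
      _ ≤ |Y ω| * 1 := mul_le_mul_of_nonneg_left (hIg'_abs ω) (abs_nonneg _)
      _ = ‖Y ω‖ := by rw [mul_one]; rfl
  have hf2_int : Integrable (fun ω => (eg ω / eg' ω) * (Y ω * Ig' ω)) μ := by
    refine Integrable.mono' (g := fun ω => η⁻¹ * ‖Y ω‖) (hYint.norm.const_mul η⁻¹)
      (hr_meas.aestronglyMeasurable.mul (hYint.1.mul hIgm'.aestronglyMeasurable)) ?_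
    filter_upwards [hr_bound] with ω hω
    have h2 : ‖Y ω * Ig' ω‖ ≤ ‖Y ω‖ := by
      calc ‖Y ω * Ig' ω‖ = |Y ω| * |Ig' ω| := abs_mul _ _
        _ ≤ |Y ω| * 1 := mul_le_mul_of_nonneg_left (hIg'_abs ω) (abs_nonneg _)
        _ = ‖Y ω‖ := by rw [mul_one]; rfl
    calc ‖(eg ω / eg' ω) * (Y ω * Ig' ω)‖ = |eg ω / eg' ω| * ‖Y ω * Ig' ω‖ := abs_mul _ _
      _ ≤ η⁻¹ * ‖Y ω‖ := mul_le_mul hω h2 (norm_nonneg _) (inv_pos.mpr hη).le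
  have hf3_int : Integrable (fun ω => ((eg ω / eg' ω) * mt ω) * Ig' ω) μ := by
    refine Integrable.mono' (g := fun ω => η⁻¹ * ‖mt ω‖) (hmt_int.norm.const_mul η⁻¹)
      ((hr_meas.mul hmt_meas).mul hIgm').aestronglyMeasurable ?_
    filter_upwards [hr_bound] with ω hω
    have h2 : ‖((eg ω / eg' ω) * mt ω) * Ig' ω‖ ≤ |eg ω / eg' ω| * ‖mt ω‖ := by
      calc ‖((eg ω / eg' ω) * mt ω) * Ig' ω‖
          = |eg ω / eg' ω| * |mt ω| * |Ig' ω| := by rw [Real.norm_eq_abs, abs_mul, abs_mul]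
        _ ≤ |eg ω / eg' ω| * |mt ω| * 1 :=
            mul_le_mul_of_nonneg_left (hIg'_abs ω) (mul_nonneg (abs_nonneg _) (abs_nonneg _))
        _ = |eg ω / eg' ω| * ‖mt ω‖ := by rw [mul_one]; rfl
    exact h2.trans (mul_le_mul_of_nonneg_right hω (norm_nonneg _))
  -- the three conditional expectations
  have h1 : μ[(fun ω => mt ω * Ig ω) | m] =ᵐ[μ] fun ω => mt ω * eg ω := by
    have h := condExp_mul_of_stronglyMeasurable_left (μ := μ) hmt_sm hf1_int hIg_int
    refine h.trans ?_
    rw [← heg]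
    exact Filter.EventuallyEq.rfl
  have h2 : μ[(fun ω => (eg ω / eg' ω) * (Y ω * Ig' ω)) | m]
      =ᵐ[μ] fun ω => (eg ω / eg' ω) * C ω := by
    have h := condExp_mul_of_stronglyMeasurable_left (μ := μ) hr_sm hf2_int hYI_int
    refine h.trans ?_
    exact Filter.EventuallyEq.rfl
  have h3 : μ[(fun ω => ((eg ω / eg' ω) * mt ω) * Ig' ω) | m]
      =ᵐ[μ] fun ω => ((eg ω / eg' ω) * mt ω) * eg' ω := by
    have h := condExp_mul_of_stronglyMeasurable_left (μ := μ) (hr_sm.mul hmt_sm) hf3_int hIg'_int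
    refine h.trans ?_
    rw [← heg']
    exact Filter.EventuallyEq.rfl
  -- decompose the score
  have hdecomp : (fun ω => Ig ω * mt ω + Ig' ω * (eg ω / eg' ω) * (Y ω - mt ω))
      = fun ω => (mt ω * Ig ω)
        + ((eg ω / eg' ω) * (Y ω * Ig' ω) - ((eg ω / eg' ω) * mt ω) * Ig' ω) := by
    funext ω; ring
  rw [hdecomp]
  have hadd := condExp_add (μ := μ) (m := m) hf1_int (hf2_int.sub hf3_int)
  have hsub := condExp_sub (μ := μ) (m := m) hf2_int hf3_int
  refine hadd.trans ?_
  filter_upwards [h1, h2, h3, hsub, hpos] with ω hw1 hw2 hw3 hwsub hwpos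
  have hne : eg' ω ≠ 0 := ne_of_gt hwpos
  simp only [Pi.add_apply, Pi.sub_apply] at *
  rw [hwsub, hw1, hw2, hw3, hmt_eq ω]
  field_simp
  ring

/-- Double-robustness identity: the augmented (AIPW-style) score built from the
reference-group regression `m̃(X,g') = E[Y·1(G=g') | σ(X)] / e_{g'}(X)` and the
propensity-ratio-weighted residual has conditional expectation given `X` equal
to `e_g(X)·m̃(X,g')`, under overlap `e_{g'} ≥ η > 0` a.s. -/
theorem stmt9 {Ω Q : Type*} [MeasurableSpace Ω] [MeasurableSpace Q]
    [MeasurableSingletonClass Q] [Fintype Q] [DecidableEq Q]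
    (μ : Measure Ω) [IsProbabilityMeasure μ]
    (X : Ω → ℝ) (hX : Measurable X) (G : Ω → Q) (hG : Measurable G)
    (Y : Ω → ℝ) (hYint : Integrable Y μ)
    (g g' : Q) (e : Q → Ω → ℝ)
    (he : ∀ q, e q =
      μ[(fun ω => if G ω = q then (1 : ℝ) else 0) |
        MeasurableSpace.comap X (inferInstance : MeasurableSpace ℝ)])
    (η : ℝ) (hη : 0 < η) (hoverlap : ∀ᵐ ω ∂μ, η ≤ e g' ω)
    (mt : Ω → ℝ)
    (hmt : mt = fun ω =>
      (μ[(fun ω' => Y ω' * (if G ω' = g' then (1 : ℝ) else 0)) |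
        MeasurableSpace.comap X (inferInstance : MeasurableSpace ℝ)]) ω / e g' ω) :
    μ[(fun ω => (if G ω = g then (1 : ℝ) else 0) * mt ω
        + (if G ω = g' then (1 : ℝ) else 0) * (e g ω / e g' ω) * (Y ω - mt ω)) |
      MeasurableSpace.comap X (inferInstance : MeasurableSpace ℝ)]
      =ᵐ[μ] fun ω => e g ω * mt ω := by
  have key := aux_main (m := MeasurableSpace.comap X (inferInstance : MeasurableSpace ℝ))
    hX.comap_le μ Y hYint
    (fun ω => if G ω = g then (1 : ℝ) else 0) (fun ω => if G ω = g' then (1 : ℝ) else 0)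
    (Measurable.ite (hG (measurableSet_singleton g)) measurable_const measurable_const)
    (Measurable.ite (hG (measurableSet_singleton g')) measurable_const measurable_const)
    (fun ω => by by_cases h : G ω = g <;> simp [h])
    (fun ω => by by_cases h : G ω = g' <;> simp [h])
    (e g) (e g') (he g) (he g') η hη hoverlap mt hmt
  have heq : (fun ω => (if G ω = g then (1 : ℝ) else 0) * mt ω
        + (if G ω = g' then (1 : ℝ) else 0) * (e g ω / e g' ω) * (Y ω - mt ω))
      = (fun ω => (fun ω => if G ω = g then (1 : ℝ) else 0) ω * mt ω
        + (fun ω => if G ω = g' then (1 : ℝ) else 0) ω * (e g ω / e g' ω) * (Y ω - mt ω)) := rfl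
  rw [heq]
  exact key
end

section
/- Let Π be a set, M a nonempty set, V : Π × M → ℝ bounded, and M̂ another nonempty ambiguity set with the property that for all π ∈ Π, |inf_{d ∈ M̂} V(π, d) − inf_{d ∈ M} V(π, d)| ≤ ε. If π̂ maximizes inf_{d ∈ M̂} V(π, d) over Π and π̃ ∈ Π satisfies V(π̃, d) = V(π̃, d') for all d, d' ∈ M, with the true model d* ∈ M, then V(π̃, d*) − inf_{d ∈ M} V(π̂, d) ≤ 2ε and hence V(π̃, d*) − V(π̂, d*) ≤ 2ε. -/
/-- Robustness of the safety guarantee to estimation error in the ambiguity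
set: if worst-case values under the empirical class `Mhat` are uniformly within
`ε` of those under the true class `M`, then the empirically maximin policy
loses at most `2ε` relative to the model-independent baseline `πt`. -/
theorem stmt14 {P D : Type*} (V : P → D → ℝ) (M Mhat : Set D)
    (hM : M.Nonempty) (hMhat : Mhat.Nonempty)
    (hbddM : ∀ π, BddBelow ((V π) '' M)) (hbddMhat : ∀ π, BddBelow ((V π) '' Mhat))
    (ε : ℝ)
    (hε : ∀ π, |sInf ((V π) '' Mhat) - sInf ((V π) '' M)| ≤ ε)
    (pihat pit : P)
    (hopt : ∀ π, sInf ((V π) '' Mhat) ≤ sInf ((V pihat) '' Mhat))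
    (hbase : ∀ d ∈ M, ∀ d' ∈ M, V pit d = V pit d')
    (dstar : D) (hdstar : dstar ∈ M) :
    V pit dstar - sInf ((V pihat) '' M) ≤ 2 * ε ∧
      V pit dstar - V pihat dstar ≤ 2 * ε := by
  have hconst : sInf ((V pit) '' M) = V pit dstar := by
    have himg : (V pit) '' M = {V pit dstar} := by
      ext x
      constructor
      · rintro ⟨d, hd, rfl⟩
        exact Set.mem_singleton_iff.mpr (hbase d hd dstar hdstar)
      · rintro rfl
        exact ⟨dstar, hdstar, rfl⟩
    rw [himg, csInf_singleton]
  have h1 := abs_le.mp (hε pihat)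
  have h2 := abs_le.mp (hε pit)
  have hkey : V pit dstar - sInf ((V pihat) '' M) ≤ 2 * ε := by
    have := hopt pit
    nlinarith [h1.1, h1.2, h2.1, h2.2, hconst]
  refine ⟨hkey, ?_⟩
  have hmem : sInf ((V pihat) '' M) ≤ V pihat dstar :=
    csInf_le (hbddM pihat) ⟨dstar, hdstar, rfl⟩
  linarith
end
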